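/- Let F be a Banach space with FDD (F_i) of constant K and let Θ ↘ 0. Then there is Γ ↘ 0 (e.g., with 12K² Σ_{i≥m} γ_i < θ_m and γ_m < λ_m for a suitable perturbation sequence Λ) such that for all M ↗ ∞, every M-separated Γ-block sequence (x_i) in E is a normalised basic sequence, and every normalised block sequence of (x_i) is an M-separated Θ-block sequence. -/

import Mathlib

open Filter Topology

noncomputable section

structure SchauderBasis' (X : Type*) [NormedAddCommGroup X] [NormedSpace ℝ X] where
  e : ℕ → X
  coord : ℕ → X →L[ℝ] ℝ
  biorth : ∀ n m, coord n (e m) = if n = m then 1 else 0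
  expansion : ∀ x : X,
    Filter.Tendsto (fun N => ∑ n ∈ Finset.range N, coord n x • e n) Filter.atTop (nhds x)
  normalised : ∀ n, ‖e n‖ = 1

section Defs

variable {X Y : Type*} [NormedAddCommGroup X] [NormedSpace ℝ X]
  [NormedAddCommGroup Y] [NormedSpace ℝ Y]

/-- Convergence of the series `∑ x n` (of partial sums). -/
def Converges (x : ℕ → X) : Prop :=
  ∃ s, Filter.Tendsto (fun N => ∑ n ∈ Finset.range N, x n) Filter.atTop (nhds s)

/-- Two sequences are equivalent if the same scalar series converge. -/
def SeqEquiv (x : ℕ → X) (y : ℕ → Y) : Prop :=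
  ∀ a : ℕ → ℝ, Converges (fun n => a n • x n) ↔ Converges (fun n => a n • y n)

/-- `C`-equivalence of two sequences. -/
def CEquiv (C : ℝ) (x : ℕ → X) (y : ℕ → Y) : Prop :=
  ∀ (a : ℕ → ℝ) (N : ℕ),
    C⁻¹ * ‖∑ n ∈ Finset.range N, a n • y n‖ ≤ ‖∑ n ∈ Finset.range N, a n • x n‖ ∧
    ‖∑ n ∈ Finset.range N, a n • x n‖ ≤ C * ‖∑ n ∈ Finset.range N, a n • y n‖

/-- A basic sequence: uniformly bounded partial-sum projections. -/
def IsBasicSeq (x : ℕ → X) : Prop :=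
  ∃ K, 1 ≤ K ∧ ∀ (a : ℕ → ℝ) (m n : ℕ), m ≤ n →
    ‖∑ i ∈ Finset.range m, a i • x i‖ ≤ K * ‖∑ i ∈ Finset.range n, a i • x i‖

/-- A sequence of signs. -/
def IsSigns (θ : ℕ → ℝ) : Prop := ∀ n, θ n = 1 ∨ θ n = -1

end Defs

namespace SchauderBasis'

variable {X : Type*} [NormedAddCommGroup X] [NormedSpace ℝ X] (b : SchauderBasis' X)

/-- Support of a vector with respect to the basis. -/
def supp (x : X) : Set ℕ := {n | b.coord n x ≠ 0}

/-- A normalised block sequence of the basis. -/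
def IsBlockSeq (x : ℕ → X) : Prop :=
  (∀ n, ‖x n‖ = 1) ∧ (∀ n, (b.supp (x n)).Finite) ∧
  ∀ n, ∀ i ∈ b.supp (x n), ∀ j ∈ b.supp (x (n+1)), i < j

/-- Unconditionality of the basis. -/
def Unconditional : Prop :=
  ∀ θ : ℕ → ℝ, IsSigns θ → SeqEquiv (fun n => θ n • b.e n) b.e

/-- 1-unconditionality (finite-sum form). -/
def OneUnconditional : Prop :=
  ∀ (θ a : ℕ → ℝ), IsSigns θ → ∀ N,
    ‖∑ n ∈ Finset.range N, (θ n * a n) • b.e n‖ ≤ ‖∑ n ∈ Finset.range N, a n • b.e n‖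

/-- The shift property: every normalised block sequence is equivalent to its shift. -/
def ShiftProperty : Prop :=
  ∀ x : ℕ → X, b.IsBlockSeq x → SeqEquiv x (fun n => x (n+1))

/-- The basis is shrinking. -/
def Shrinking : Prop :=
  ∀ f : X →L[ℝ] ℝ, Filter.Tendsto
    (fun n => sSup ((fun y => |f y|) ''
      {y | y ∈ Submodule.span ℝ (Set.range fun i => b.e (n + i)) ∧ ‖y‖ ≤ 1}))
    Filter.atTop (nhds 0)

/-- The basis is boundedly complete. -/
def BoundedlyComplete : Prop :=
  ∀ a : ℕ → ℝ, (∃ M, ∀ N, ‖∑ i ∈ Finset.range N, a i • b.e i‖ ≤ M) →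
    Converges (fun i => a i • b.e i)

end SchauderBasis'
/-- A finite-dimensional decomposition of `F`, given by its coordinate projections. -/
structure FDD (F : Type*) [NormedAddCommGroup F] [NormedSpace ℝ F] where
  Q : ℕ → F →L[ℝ] F
  idem : ∀ i x, Q i (Q i x) = Q i x
  orth : ∀ i j, i ≠ j → ∀ x, Q i (Q j x) = 0
  findim : ∀ i, FiniteDimensional ℝ (LinearMap.range ((Q i).toLinearMap))
  expansion : ∀ x,
    Filter.Tendsto (fun N => ∑ i ∈ Finset.range N, Q i x) Filter.atTop (nhds x)

namespace FDD

variable {F : Type*} [NormedAddCommGroup F] [NormedSpace ℝ F] (d : FDD F)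

/-- Projection onto a finite set of coordinates. -/
def proj (I : Finset ℕ) : F →L[ℝ] F := ∑ i ∈ I, d.Q i

/-- `K` is a constant for the decomposition. -/
def HasConstant (K : ℝ) : Prop :=
  1 ≤ K ∧ ∀ (x : F) (N : ℕ), ‖∑ i ∈ Finset.range N, d.Q i x‖ ≤ K * ‖x‖

/-- A `Δ`-block sequence of the decomposition, lying in `E`. -/
def DeltaBlock (E : Set F) (δ : ℕ → ℝ) (x : ℕ → F) : Prop :=
  (∀ i, x i ∈ E) ∧ (∀ i, ‖x i‖ = 1) ∧
  ∃ l r : ℕ → ℕ, (∀ i, l i ≤ r i) ∧ (∀ i, r i < l (i+1)) ∧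
    ∀ i, ‖d.proj (Finset.Icc (l i) (r i)) (x i) - x i‖ < δ i

/-- An `M`-separated `Δ`-block sequence of the decomposition, lying in `E`. -/
def MSepDeltaBlock (E : Set F) (δ : ℕ → ℝ) (M : ℕ → ℕ) (x : ℕ → F) : Prop :=
  (∀ i, x i ∈ E) ∧ (∀ i, ‖x i‖ = 1) ∧
  ∃ l r : ℕ → ℕ, (∀ i, l i ≤ r i) ∧ (∀ i, r i < l (i+1)) ∧
    (∀ i, ‖d.proj (Finset.Icc (l i) (r i)) (x i) - x i‖ < δ i) ∧
    M 0 < l 0 ∧ ∀ i, ∃ j, r i < M j ∧ M (j+1) < l (i+1)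

end FDD

/-- A decreasing null sequence of positive reals. -/
def NullSeq (δ : ℕ → ℝ) : Prop :=
  (∀ i, 0 < δ i) ∧ (∀ i, δ (i+1) ≤ δ i) ∧ Filter.Tendsto δ Filter.atTop (nhds 0)

/-- A normalised block sequence of the sequence `x`. -/
def IsBlockOf {F : Type*} [NormedAddCommGroup F] [NormedSpace ℝ F]
    (x z : ℕ → F) : Prop :=
  ∃ (p : ℕ → ℕ) (a : ℕ → ℝ), StrictMono p ∧
    (∀ k, z k = ∑ i ∈ Finset.Ico (p k) (p (k+1)), a i • x i) ∧ ∀ k, ‖z k‖ = 1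

/-!
Every `x i` is `γ i`-close to its projection onto its own interval `I i = [l i, r i]`. Since an
interval projection `P_J` has norm at most `2K` and `P_J P_I = P_(J ∩ I)`, on such an `x i` the
projection `P_J` acts, up to an error `(2K + 1) γ i`, as the identity if `I i ⊆ J` and as `0` if
`I i` misses `J`. Hence on `∑ a i • x i` it acts as restriction to the indices with `I i ⊆ J`, up
to `(2K + 1) · max |a i| · ∑ γ i`. With `J = I i` this bounds each coefficient by
`4K ‖∑ a j • x j‖`; with `J = [0, r m]` it bounds the partial sums (basic sequence); with `J` the
hull of the intervals making up a block `z k` it shows that `z k` is `Θ k`-close to its projection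
onto that hull. It remains to choose `γ` with `4K (2K + 1) ∑_{i ≥ m} γ i ≤ min (Θ m) 1 / 2`.
-/

open Finset

lemma Finset.disjoint_Icc_Icc_of_lt {α : Type*} [Preorder α] [LocallyFiniteOrder α]
    {a b c e : α} (h : b < c) : Disjoint (Icc a b) (Icc c e) :=
  disjoint_left.mpr fun _ hb hc => ((mem_Icc.mp hc).1.trans (mem_Icc.mp hb).2).not_gt h

namespace FDD

variable {F : Type*} [NormedAddCommGroup F] [NormedSpace ℝ F] {d : FDD F}

lemma proj_proj (d : FDD F) (I J : Finset ℕ) (x : F) :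
    d.proj I (d.proj J x) = d.proj (I ∩ J) x := by
  have hQ : ∀ i, d.Q i (∑ j ∈ J, d.Q j x) = if i ∈ J then d.Q i x else 0 := by
    intro i
    rw [map_sum]
    split_ifs with hi
    · rw [sum_eq_single_of_mem i hi fun j _ hji => d.orth i j (Ne.symm hji) x, d.idem]
    · exact sum_eq_zero fun j hj => d.orth i j (ne_of_mem_of_not_mem hj hi).symm x
  simp only [proj, _root_.sum_apply, hQ, sum_ite_mem]

lemma proj_empty (d : FDD F) (x : F) : d.proj ∅ x = 0 := by
  simp [proj]

lemma norm_proj_Icc_sub_self_le {B : ℝ} (hB : ∀ p q (z : F), ‖d.proj (Icc p q) z‖ ≤ B * ‖z‖)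
    {I : Finset ℕ} {p q : ℕ} (hI : I ⊆ Icc p q) (y : F) :
    ‖d.proj (Icc p q) y - y‖ ≤ (B + 1) * ‖d.proj I y - y‖ := by
  have h : d.proj (Icc p q) y - y = d.proj (Icc p q) (y - d.proj I y) + (d.proj I y - y) := by
    rw [map_sub, proj_proj, inter_eq_right.mpr hI]
    abel
  calc ‖d.proj (Icc p q) y - y‖ ≤ B * ‖y - d.proj I y‖ + ‖d.proj I y - y‖ :=
        h ▸ (norm_add_le _ _).trans (add_le_add_left (hB _ _ _) _)
    _ = (B + 1) * ‖d.proj I y - y‖ := by rw [norm_sub_rev]; ring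

lemma norm_proj_Icc_le_of_disjoint {B : ℝ}
    (hB : ∀ p q (z : F), ‖d.proj (Icc p q) z‖ ≤ B * ‖z‖)
    {I : Finset ℕ} {p q : ℕ} (hI : Disjoint (Icc p q) I) (y : F) :
    ‖d.proj (Icc p q) y‖ ≤ B * ‖d.proj I y - y‖ := by
  have h : d.proj (Icc p q) y = d.proj (Icc p q) (y - d.proj I y) := by
    rw [map_sub, proj_proj, disjoint_iff_inter_eq_empty.mp hI, proj_empty, sub_zero]
  rw [h, norm_sub_rev]
  exact hB _ _ _

/-- The interval condition of `FDD.DeltaBlock`, with the intervals `[l i, r i]` fixed. -/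
structure DeltaBlockWith (d : FDD F) (δ : ℕ → ℝ) (x : ℕ → F) (l r : ℕ → ℕ) : Prop where
  le : ∀ i, l i ≤ r i
  lt : ∀ i, r i < l (i + 1)
  close : ∀ i, ‖d.proj (Icc (l i) (r i)) (x i) - x i‖ < δ i

namespace DeltaBlockWith

variable {γ : ℕ → ℝ} {x : ℕ → F} {l r : ℕ → ℕ} {B : ℝ}

lemma pos (hx : d.DeltaBlockWith γ x l r) (i : ℕ) : 0 < γ i :=
  (norm_nonneg _).trans_lt (hx.close i)

lemma monotone_l (hx : d.DeltaBlockWith γ x l r) : Monotone l :=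
  monotone_nat_of_le_succ fun i => (hx.le i).trans (hx.lt i).le

lemma monotone_r (hx : d.DeltaBlockWith γ x l r) : Monotone r :=
  monotone_nat_of_le_succ fun i => (hx.lt i).le.trans (hx.le (i + 1))

lemma r_lt_l_of_lt (hx : d.DeltaBlockWith γ x l r) {i j : ℕ} (hij : i < j) : r i < l j := by
  induction hij with
  | refl => exact hx.lt i
  | step _ ih => exact ih.trans_le ((hx.le _).trans (hx.lt _).le)

lemma disjoint_Icc (hx : d.DeltaBlockWith γ x l r) {i j : ℕ} (hij : i ≠ j) :
    Disjoint (Icc (l i) (r i)) (Icc (l j) (r j)) := by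
  rcases hij.lt_or_gt with h | h
  · exact disjoint_Icc_Icc_of_lt (hx.r_lt_l_of_lt h)
  · exact (disjoint_Icc_Icc_of_lt (hx.r_lt_l_of_lt h)).symm

lemma norm_proj_sum_sub_sum_le (hx : d.DeltaBlockWith γ x l r)
    (hB : ∀ p q (z : F), ‖d.proj (Icc p q) z‖ ≤ B * ‖z‖) (hB0 : 0 ≤ B)
    {S T : Finset ℕ} (hTS : T ⊆ S) {p q : ℕ} (hT : ∀ i ∈ T, Icc (l i) (r i) ⊆ Icc p q)
    (hS : ∀ i ∈ S \ T, Disjoint (Icc p q) (Icc (l i) (r i))) {a : ℕ → ℝ} {A : ℝ}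
    (ha : ∀ i ∈ S, |a i| ≤ A) :
    ‖d.proj (Icc p q) (∑ i ∈ S, a i • x i) - ∑ i ∈ T, a i • x i‖ ≤
      A * (B + 1) * ∑ i ∈ S, γ i := by
  have hterm : ∀ i ∈ S,
      ‖d.proj (Icc p q) (x i) - if i ∈ T then x i else 0‖ ≤ (B + 1) * γ i := by
    intro i hi
    split_ifs with hiT
    · exact (norm_proj_Icc_sub_self_le hB (hT i hiT) _).trans
        (mul_le_mul_of_nonneg_left (hx.close i).le (by linarith))
    · rw [sub_zero]
      calc ‖d.proj (Icc p q) (x i)‖ ≤ B * γ i :=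
            (norm_proj_Icc_le_of_disjoint hB (hS i (mem_sdiff.mpr ⟨hi, hiT⟩)) _).trans
              (mul_le_mul_of_nonneg_left (hx.close i).le hB0)
        _ ≤ (B + 1) * γ i := by linarith [hx.pos i]
  have hdiff : d.proj (Icc p q) (∑ i ∈ S, a i • x i) - ∑ i ∈ T, a i • x i =
      ∑ i ∈ S, a i • (d.proj (Icc p q) (x i) - if i ∈ T then x i else 0) := by
    simp only [map_sum, map_smul, smul_sub, sum_sub_distrib, smul_ite, smul_zero, sum_ite_mem,
      inter_eq_right.mpr hTS]
  rw [hdiff, mul_assoc, mul_sum, mul_sum]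
  refine (norm_sum_le _ _).trans (sum_le_sum fun i hi => ?_)
  rw [norm_smul, Real.norm_eq_abs]
  exact mul_le_mul (ha i hi) (hterm i hi) (norm_nonneg _) ((abs_nonneg _).trans (ha i hi))

lemma abs_coeff_le (hx : d.DeltaBlockWith γ x l r)
    (hB : ∀ p q (z : F), ‖d.proj (Icc p q) z‖ ≤ B * ‖z‖) (hB0 : 0 ≤ B)
    (hxn : ∀ i, ‖x i‖ = 1) {S : Finset ℕ} (hS : (B + 1) * ∑ i ∈ S, γ i ≤ 1 / 2)
    (a : ℕ → ℝ) {i : ℕ} (hi : i ∈ S) :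
    |a i| ≤ 2 * B * ‖∑ j ∈ S, a j • x j‖ := by
  obtain ⟨i₀, hi₀, hmax⟩ := exists_max_image S (fun j => |a j|) ⟨i, hi⟩
  set P := d.proj (Icc (l i₀) (r i₀))
  set y := ∑ j ∈ S, a j • x j
  have hclose : ‖P y - a i₀ • x i₀‖ ≤ |a i₀| / 2 := by
    have h := hx.norm_proj_sum_sub_sum_le hB hB0 (singleton_subset_iff.mpr hi₀)
      (fun j hj => by rw [mem_singleton.mp hj])
      (fun j hj => hx.disjoint_Icc fun h => (mem_sdiff.mp hj).2 (mem_singleton.mpr h.symm)) hmax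
    rw [sum_singleton, mul_assoc] at h
    exact h.trans (by nlinarith [abs_nonneg (a i₀)])
  have h₀ : |a i₀| ≤ B * ‖y‖ + |a i₀| / 2 :=
    calc |a i₀| = ‖a i₀ • x i₀‖ := by rw [norm_smul, hxn, mul_one, Real.norm_eq_abs]
      _ ≤ ‖P y‖ + ‖P y - a i₀ • x i₀‖ := by
        rw [norm_sub_rev]; exact norm_le_insert' _ _
      _ ≤ B * ‖y‖ + |a i₀| / 2 := add_le_add (hB _ _ _) hclose
  linarith [hmax i hi]

lemma isBasicSeq (hx : d.DeltaBlockWith γ x l r)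
    (hB : ∀ p q (z : F), ‖d.proj (Icc p q) z‖ ≤ B * ‖z‖) (hB1 : 1 ≤ B) (hxn : ∀ i, ‖x i‖ = 1)
    (hsum : ∀ n, 2 * B * (B + 1) * ∑ i ∈ range n, γ i ≤ 1 / 2) : IsBasicSeq x := by
  refine ⟨B + 1, by linarith, fun a m n hmn => ?_⟩
  set y := ∑ i ∈ range n, a i • x i
  rcases m with _ | m
  · simp only [range_zero, sum_empty, norm_zero]
    positivity
  have hcoeff : ∀ i ∈ range n, |a i| ≤ 2 * B * ‖y‖ := fun i hi =>
    hx.abs_coeff_le hB (by linarith) hxn (by nlinarith [hsum n]) a hi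
  have hclose := hx.norm_proj_sum_sub_sum_le hB (by linarith) (range_subset_range.mpr hmn)
    (fun i hi => Icc_subset_Icc (Nat.zero_le _)
      (hx.monotone_r (Nat.lt_succ_iff.mp (mem_range.mp hi))))
    (fun i hi => disjoint_Icc_Icc_of_lt (hx.r_lt_l_of_lt
      (not_le.mp fun h => (mem_sdiff.mp hi).2 (mem_range.mpr (Nat.lt_succ_of_le h))))) hcoeff
  calc ‖∑ i ∈ range (m + 1), a i • x i‖
      ≤ ‖d.proj (Icc 0 (r m)) y‖ + ‖d.proj (Icc 0 (r m)) y - ∑ i ∈ range (m + 1), a i • x i‖ := by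
        rw [norm_sub_rev]; exact norm_le_insert' _ _
    _ ≤ B * ‖y‖ + ‖y‖ / 2 := by
        refine add_le_add (hB _ _ _) (hclose.trans ?_)
        have := mul_le_mul_of_nonneg_left (hsum n) (norm_nonneg y)
        linarith
    _ ≤ (B + 1) * ‖y‖ := by linarith [norm_nonneg y]

lemma of_isBlockOf (hx : d.DeltaBlockWith γ x l r)
    (hB : ∀ p q (z : F), ‖d.proj (Icc p q) z‖ ≤ B * ‖z‖) (hB1 : 1 ≤ B) (hxn : ∀ i, ‖x i‖ = 1)
    (hsum : ∀ m n, 2 * B * (B + 1) * ∑ i ∈ Ico m n, γ i ≤ 1 / 2) {Θ : ℕ → ℝ}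
    (hΘ : ∀ m n, 2 * B * (B + 1) * ∑ i ∈ Ico m n, γ i < Θ m) (hΘanti : Antitone Θ)
    {p : ℕ → ℕ} {a : ℕ → ℝ} {z : ℕ → F} (hp : StrictMono p)
    (hz : ∀ k, z k = ∑ i ∈ Ico (p k) (p (k + 1)), a i • x i) (hzn : ∀ k, ‖z k‖ = 1) :
    d.DeltaBlockWith Θ z (fun k => l (p k)) (fun k => r (p (k + 1) - 1)) where
  le k := (hx.monotone_l (Nat.le_sub_one_of_lt (hp k.lt_succ_self))).trans (hx.le _)
  lt k := by
    simpa only [Nat.sub_one_add_one (hp k.lt_succ_self).ne_bot] using hx.lt (p (k + 1) - 1)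
  close k := by
    have hcoeff : ∀ i ∈ Ico (p k) (p (k + 1)), |a i| ≤ 2 * B := fun i hi => by
      simpa only [← hz, hzn, mul_one] using
        hx.abs_coeff_le hB (by linarith) hxn (by nlinarith [hsum (p k) (p (k + 1))]) a hi
    have hclose := hx.norm_proj_sum_sub_sum_le hB (by linarith) subset_rfl
      (fun i hi => Icc_subset_Icc (hx.monotone_l (mem_Ico.mp hi).1)
        (hx.monotone_r (Nat.le_sub_one_of_lt (mem_Ico.mp hi).2)))
      (fun i hi => by simp at hi) hcoeff
    rw [← hz] at hclose
    calc _ ≤ 2 * B * (B + 1) * ∑ i ∈ Ico (p k) (p (k + 1)), γ i := hclose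
      _ < Θ (p k) := hΘ _ _
      _ ≤ Θ k := hΘanti hp.le_apply

end DeltaBlockWith

end FDD

lemma NullSeq.exists_nullSeq_mul_sum_Ico_le {Θ : ℕ → ℝ} (hΘ : NullSeq Θ) {C : ℝ} (hC : 0 < C) :
    ∃ γ : ℕ → ℝ, NullSeq γ ∧ ∀ m n, C * ∑ i ∈ Ico m n, γ i ≤ min (Θ m) 1 / 2 := by
  obtain ⟨hpos, hdec, hlim⟩ := hΘ
  have hmin : ∀ i, 0 < min (Θ i) 1 := fun i => lt_min (hpos i) one_pos
  refine ⟨fun i => min (Θ i) 1 / (4 * C) * (1 / 2) ^ i,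
    ⟨fun i => by have := hmin i; positivity, fun i => ?_, ?_⟩, fun m n => ?_⟩
  · have := hmin i
    exact mul_le_mul (by gcongr; exact hdec i) (pow_le_pow_of_le_one (by norm_num) (by norm_num)
      i.le_succ) (by positivity) (by positivity)
  · simpa using ((hlim.min tendsto_const_nhds).div_const (4 * C)).mul
      (tendsto_pow_atTop_nhds_zero_of_lt_one (r := (1 / 2 : ℝ)) (by norm_num) (by norm_num))
  · have hgeom : ∑ i ∈ Ico m n, (1 / 2 : ℝ) ^ i ≤ 2 := by
      refine (sum_le_sum_of_subset_of_nonneg ?_ fun i _ _ => by positivity).trans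
        (sum_geometric_two_le n)
      rw [range_eq_Ico]
      exact Ico_subset_Ico_left (Nat.zero_le m)
    have := hmin m
    calc C * ∑ i ∈ Ico m n, min (Θ i) 1 / (4 * C) * (1 / 2) ^ i
        ≤ C * ∑ i ∈ Ico m n, min (Θ m) 1 / (4 * C) * (1 / 2) ^ i := by
          gcongr with i hi
          exact antitone_nat_of_succ_le hdec (mem_Ico.mp hi).1
      _ ≤ C * (min (Θ m) 1 / (4 * C) * 2) := by rw [← mul_sum]; gcongr
      _ = min (Θ m) 1 / 2 := by field_simp; ring

theorem all_blocks_lemma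
    {F : Type*} [NormedAddCommGroup F] [NormedSpace ℝ F]
    (d : FDD F) (K : ℝ) (hK : d.HasConstant K)
    (hproj : ∀ (p q : ℕ) (z : F), ‖d.proj (Finset.Icc p q) z‖ ≤ 2 * K * ‖z‖)
    (E : Submodule ℝ F)
    (Θ : ℕ → ℝ) (hΘ : NullSeq Θ) :
    ∃ γ : ℕ → ℝ, NullSeq γ ∧
      ∀ M : ℕ → ℕ, StrictMono M →
        ∀ x : ℕ → F, d.MSepDeltaBlock (E : Set F) γ M x →
          IsBasicSeq x ∧
          ∀ z : ℕ → F, IsBlockOf x z → d.MSepDeltaBlock (E : Set F) Θ M z := by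
  have hB1 : 1 ≤ 2 * K := by linarith [hK.1]
  obtain ⟨γ, hγ, hsum⟩ :=
    hΘ.exists_nullSeq_mul_sum_Ico_le (C := 2 * (2 * K) * (2 * K + 1)) (by nlinarith)
  have hsum_half : ∀ m n, 2 * (2 * K) * (2 * K + 1) * ∑ i ∈ Ico m n, γ i ≤ 1 / 2 :=
    fun m n => (hsum m n).trans (by linarith [min_le_right (Θ m) 1])
  have hsum_lt : ∀ m n, 2 * (2 * K) * (2 * K + 1) * ∑ i ∈ Ico m n, γ i < Θ m :=
    fun m n => (hsum m n).trans_lt (by linarith [min_le_left (Θ m) 1, hΘ.1 m])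
  refine ⟨γ, hγ, fun M _ x ⟨hxE, hxn, l, r, hlr, hrl, hδ, hM0, hsep⟩ => ?_⟩
  have hx : d.DeltaBlockWith γ x l r := ⟨hlr, hrl, hδ⟩
  refine ⟨hx.isBasicSeq hproj hB1 hxn fun n => range_eq_Ico n ▸ hsum_half 0 n, ?_⟩
  rintro z ⟨p, a, hp, hz, hzn⟩
  obtain ⟨hle, hlt, hclose⟩ := hx.of_isBlockOf hproj hB1 hxn hsum_half hsum_lt
    (antitone_nat_of_succ_le hΘ.2.1) hp hz hzn
  refine ⟨fun k => hz k ▸ E.sum_mem fun i _ => E.smul_mem _ (hxE i), hzn, _, _, hle, hlt, hclose,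
    hM0.trans_le (hx.monotone_l (Nat.zero_le _)), fun k => ?_⟩
  simpa only [Nat.sub_one_add_one (hp k.lt_succ_self).ne_bot] using hsep (p (k + 1) - 1)
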